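/- Let G be a finite connected simple graph that is (P7, C7, C4, gem)-free. If G contains an induced subgraph isomorphic to F2, then either G has a clique cutset or G has a bisimplicial vertex. -/

import Mathlib

open SimpleGraph

/-- `G` contains no induced subgraph isomorphic to `H`. -/
def IndFree {V : Type*} {W : Type*} (G : SimpleGraph V) (H : SimpleGraph W) : Prop :=
  IsEmpty (H ↪g G)

/-- The gem: a `P4` `0-1-2-3` plus a vertex `4` adjacent to all of it. -/
def gemGraph : SimpleGraph (Fin 5) :=
  fromEdgeSet {s(0,1), s(1,2), s(2,3), s(4,0), s(4,1), s(4,2), s(4,3)}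

/-- `F2`: the 6-cycle `v1-...-v6 = 0-...-5` plus vertices `x1 = 6`, `z1 = 7`
and edges `x1v1, x1v2, x1z1, z1v1, z1v4`. -/
def graphF2 : SimpleGraph (Fin 8) :=
  fromEdgeSet {s(0,1), s(1,2), s(2,3), s(3,4), s(4,5), s(5,0),
               s(6,0), s(6,1), s(6,7), s(7,0), s(7,3)}

/-- A vertex is bisimplicial if its neighborhood is the union of two cliques. -/
def IsBisimplicial {V : Type*} (G : SimpleGraph V) (v : V) : Prop :=
  ∃ K₁ K₂ : Set V, G.IsClique K₁ ∧ G.IsClique K₂ ∧ G.neighborSet v = K₁ ∪ K₂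

/-- `G` has a clique cutset: a clique `K` whose removal separates two vertices
outside `K` which are connected in `G`. -/
def HasCliqueCutset {V : Type*} (G : SimpleGraph V) : Prop :=
  ∃ K : Set V, G.IsClique K ∧ ∃ a b : (Kᶜ : Set V),
    G.Reachable a.1 b.1 ∧ ¬ (G.induce Kᶜ).Reachable a b


instance : DecidableRel graphF2.Adj := fun i j =>
  decidable_of_iff (s(i,j) ∈ ([s(0,1), s(1,2), s(2,3), s(3,4), s(4,5), s(5,0),
               s(6,0), s(6,1), s(6,7), s(7,0), s(7,3)] : List (Sym2 (Fin 8))) ∧ i ≠ j)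
    (by rw [graphF2, fromEdgeSet_adj]; simp)

instance : DecidableRel gemGraph.Adj := fun i j =>
  decidable_of_iff (s(i,j) ∈ ([s(0,1), s(1,2), s(2,3), s(4,0), s(4,1), s(4,2), s(4,3)] : List (Sym2 (Fin 5))) ∧ i ≠ j)
    (by rw [gemGraph, fromEdgeSet_adj]; simp)

instance : DecidableRel (pathGraph 7).Adj := fun _ _ =>
  decidable_of_iff _ (pathGraph_adj).symm


lemma noC4' {V : Type*} {G : SimpleGraph V} (hC4 : IndFree G (cycleGraph 4))
    {a0 a1 a2 a3 : V} (e0 : G.Adj a0 a1) (e1 : G.Adj a1 a2) (e2 : G.Adj a2 a3) (e3 : G.Adj a3 a0) (n0 : ¬ G.Adj a0 a2) (n1 : ¬ G.Adj a1 a3) (d0 : a0 ≠ a2) (d1 : a1 ≠ a3) : False := by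
  apply hC4.false
  refine ⟨⟨![a0,a1,a2,a3], ?_⟩, ?_⟩
  · intro i j
    fin_cases i <;> fin_cases j
    exacts [fun _ => rfl, fun h => absurd h (e0).ne, fun h => absurd h (d0), fun h => absurd h (e3.symm).ne, fun h => absurd h (e0.symm).ne, fun _ => rfl, fun h => absurd h (e1).ne, fun h => absurd h (d1), fun h => absurd h (d0.symm), fun h => absurd h (e1.symm).ne, fun _ => rfl, fun h => absurd h (e2).ne, fun h => absurd h (e3).ne, fun h => absurd h (d1.symm), fun h => absurd h (e2.symm).ne, fun _ => rfl]
  · intro i j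
    fin_cases i <;> fin_cases j
    exacts [iff_of_false (G.loopless.irrefl a0) (by decide), iff_of_true (e0) (by decide), iff_of_false (n0) (by decide), iff_of_true (e3.symm) (by decide), iff_of_true (e0.symm) (by decide), iff_of_false (G.loopless.irrefl a1) (by decide), iff_of_true (e1) (by decide), iff_of_false (n1) (by decide), iff_of_false ((fun hh => n0 hh.symm)) (by decide), iff_of_true (e1.symm) (by decide), iff_of_false (G.loopless.irrefl a2) (by decide), iff_of_true (e2) (by decide), iff_of_true (e3) (by decide), iff_of_false ((fun hh => n1 hh.symm)) (by decide), iff_of_true (e2.symm) (by decide), iff_of_false (G.loopless.irrefl a3) (by decide)]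

lemma noGem' {V : Type*} {G : SimpleGraph V} (hgem : IndFree G gemGraph)
    {a0 a1 a2 a3 a4 : V} (e0 : G.Adj a0 a1) (e1 : G.Adj a1 a2) (e2 : G.Adj a2 a3) (e3 : G.Adj a4 a0) (e4 : G.Adj a4 a1) (e5 : G.Adj a4 a2) (e6 : G.Adj a4 a3) (n0 : ¬ G.Adj a0 a2) (n1 : ¬ G.Adj a0 a3) (n2 : ¬ G.Adj a1 a3) (d0 : a0 ≠ a2) (d1 : a0 ≠ a3) (d2 : a1 ≠ a3) : False := by
  apply hgem.false
  refine ⟨⟨![a0,a1,a2,a3,a4], ?_⟩, ?_⟩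
  · intro i j
    fin_cases i <;> fin_cases j
    exacts [fun _ => rfl, fun h => absurd h (e0).ne, fun h => absurd h (d0), fun h => absurd h (d1), fun h => absurd h (e3.symm).ne, fun h => absurd h (e0.symm).ne, fun _ => rfl, fun h => absurd h (e1).ne, fun h => absurd h (d2), fun h => absurd h (e4.symm).ne, fun h => absurd h (d0.symm), fun h => absurd h (e1.symm).ne, fun _ => rfl, fun h => absurd h (e2).ne, fun h => absurd h (e5.symm).ne, fun h => absurd h (d1.symm), fun h => absurd h (d2.symm), fun h => absurd h (e2.symm).ne, fun _ => rfl, fun h => absurd h (e6.symm).ne, fun h => absurd h (e3).ne, fun h => absurd h (e4).ne, fun h => absurd h (e5).ne, fun h => absurd h (e6).ne, fun _ => rfl]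
  · intro i j
    fin_cases i <;> fin_cases j
    exacts [iff_of_false (G.loopless.irrefl a0) (by decide), iff_of_true (e0) (by decide), iff_of_false (n0) (by decide), iff_of_false (n1) (by decide), iff_of_true (e3.symm) (by decide), iff_of_true (e0.symm) (by decide), iff_of_false (G.loopless.irrefl a1) (by decide), iff_of_true (e1) (by decide), iff_of_false (n2) (by decide), iff_of_true (e4.symm) (by decide), iff_of_false ((fun hh => n0 hh.symm)) (by decide), iff_of_true (e1.symm) (by decide), iff_of_false (G.loopless.irrefl a2) (by decide), iff_of_true (e2) (by decide), iff_of_true (e5.symm) (by decide), iff_of_false ((fun hh => n1 hh.symm)) (by decide), iff_of_false ((fun hh => n2 hh.symm)) (by decide), iff_of_true (e2.symm) (by decide), iff_of_false (G.loopless.irrefl a3) (by decide), iff_of_true (e6.symm) (by decide), iff_of_true (e3) (by decide), iff_of_true (e4) (by decide), iff_of_true (e5) (by decide), iff_of_true (e6) (by decide), iff_of_false (G.loopless.irrefl a4) (by decide)]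

set_option maxHeartbeats 1000000 in
lemma noC7' {V : Type*} {G : SimpleGraph V} (hC7 : IndFree G (cycleGraph 7))
    {a0 a1 a2 a3 a4 a5 a6 : V} (e0 : G.Adj a0 a1) (e1 : G.Adj a1 a2) (e2 : G.Adj a2 a3) (e3 : G.Adj a3 a4) (e4 : G.Adj a4 a5) (e5 : G.Adj a5 a6) (e6 : G.Adj a6 a0) (n0 : ¬ G.Adj a0 a2) (n1 : ¬ G.Adj a0 a3) (n2 : ¬ G.Adj a0 a4) (n3 : ¬ G.Adj a0 a5) (n4 : ¬ G.Adj a1 a3) (n5 : ¬ G.Adj a1 a4) (n6 : ¬ G.Adj a1 a5) (n7 : ¬ G.Adj a1 a6) (n8 : ¬ G.Adj a2 a4) (n9 : ¬ G.Adj a2 a5) (n10 : ¬ G.Adj a2 a6) (n11 : ¬ G.Adj a3 a5) (n12 : ¬ G.Adj a3 a6) (n13 : ¬ G.Adj a4 a6) (d0 : a0 ≠ a2) (d1 : a0 ≠ a3) (d2 : a0 ≠ a4) (d3 : a0 ≠ a5) (d4 : a1 ≠ a3) (d5 : a1 ≠ a4) (d6 : a1 ≠ a5) (d7 : a1 ≠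 a6) (d8 : a2 ≠ a4) (d9 : a2 ≠ a5) (d10 : a2 ≠ a6) (d11 : a3 ≠ a5) (d12 : a3 ≠ a6) (d13 : a4 ≠ a6) : False := by
  apply hC7.false
  refine ⟨⟨![a0,a1,a2,a3,a4,a5,a6], ?_⟩, ?_⟩
  · intro i j
    fin_cases i <;> fin_cases j
    exacts [fun _ => rfl, fun h => absurd h (e0).ne, fun h => absurd h (d0), fun h => absurd h (d1), fun h => absurd h (d2), fun h => absurd h (d3), fun h => absurd h (e6.symm).ne, fun h => absurd h (e0.symm).ne, fun _ => rfl, fun h => absurd h (e1).ne, fun h => absurd h (d4), fun h => absurd h (d5), fun h => absurd h (d6), fun h => absurd h (d7), fun h => absurd h (d0.symm), fun h => absurd h (e1.symm).ne, fun _ => rfl, fun h => absurd h (e2).ne, fun h => absurd h (d8), fun h => absurd h (d9), fun h => absurd h (d10), fun h => absurd h (d1.symm), fun h => absurd h (d4.symm), fun h => absurd h (e2.symm).ne, fun _ => rfl, fun h => absurd h (e3).ne, fun h => absurd h (d11), fun h => absurd h (d12), fun h => absurd h (d2.symm), fun h => absurd h (d5.symm), fun h => absurd h (d8.symm), fun h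 => absurd h (e3.symm).ne, fun _ => rfl, fun h => absurd h (e4).ne, fun h => absurd h (d13), fun h => absurd h (d3.symm), fun h => absurd h (d6.symm), fun h => absurd h (d9.symm), fun h => absurd h (d11.symm), fun h => absurd h (e4.symm).ne, fun _ => rfl, fun h => absurd h (e5).ne, fun h => absurd h (e6).ne, fun h => absurd h (d7.symm), fun h => absurd h (d10.symm), fun h => absurd h (d12.symm), fun h => absurd h (d13.symm), fun h => absurd h (e5.symm).ne, fun _ => rfl]
  · intro i j
    fin_cases i <;> fin_cases j
    exacts [iff_of_false (G.loopless.irrefl a0) (by decide), iff_of_true (e0) (by decide), iff_of_false (n0) (by decide), iff_of_false (n1) (by decide), iff_of_false (n2) (by decide), iff_of_false (n3) (by decide), iff_of_true (e6.symm) (by decide), iff_of_true (e0.symm) (by decide), iff_of_false (G.loopless.irrefl a1) (by decide), iff_of_true (e1) (by decide), iff_of_false (n4) (by decide), iff_of_false (n5) (by decide), iff_of_false (n6) (by decide), iff_of_false (n7) (by decide), iff_of_false ((fun hh => n0 hh.symm)) (by decide), iff_of_true (e1.symm) (by decide), iff_of_false (G.loopless.irrefl a2) (by decide), iff_of_true (e2)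 (by decide), iff_of_false (n8) (by decide), iff_of_false (n9) (by decide), iff_of_false (n10) (by decide), iff_of_false ((fun hh => n1 hh.symm)) (by decide), iff_of_false ((fun hh => n4 hh.symm)) (by decide), iff_of_true (e2.symm) (by decide), iff_of_false (G.loopless.irrefl a3) (by decide), iff_of_true (e3) (by decide), iff_of_false (n11) (by decide), iff_of_false (n12) (by decide), iff_of_false ((fun hh => n2 hh.symm)) (by decide), iff_of_false ((fun hh => n5 hh.symm)) (by decide), iff_of_false ((fun hh => n8 hh.symm)) (by decide), iff_of_true (e3.symm) (by decide), iff_of_false (G.loopless.irrefl a4) (by decide), iff_of_true (e4) (by decide), iff_of_false (n13) (by decide), iff_of_false ((fun hh => n3 hh.symm)) (by decide), iff_of_false ((fun hh => n6 hh.symm)) (by decide), iff_of_false ((fun hh => n9 hh.symm)) (by decide), iff_of_false ((fun hh => n11 hh.symm)) (by decide), iff_of_true (e4.symm) (by decide), iff_of_false (G.loopless.irrefl a5) (by decide), iff_of_true (e5) (by decide), iff_of_true (e6) (by decide), iff_of_false ((fun hh => n7 hh.symm)) (by decide), iff_of_false ((fun hh => n10 hh.symm)) (by decide), iff_of_false ((fun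 hh => n12 hh.symm)) (by decide), iff_of_false ((fun hh => n13 hh.symm)) (by decide), iff_of_true (e5.symm) (by decide), iff_of_false (G.loopless.irrefl a6) (by decide)]

set_option maxHeartbeats 1000000 in
lemma noP7' {V : Type*} {G : SimpleGraph V} (hP7 : IndFree G (pathGraph 7))
    {a0 a1 a2 a3 a4 a5 a6 : V} (e0 : G.Adj a0 a1) (e1 : G.Adj a1 a2) (e2 : G.Adj a2 a3) (e3 : G.Adj a3 a4) (e4 : G.Adj a4 a5) (e5 : G.Adj a5 a6) (n0 : ¬ G.Adj a0 a2) (n1 : ¬ G.Adj a0 a3) (n2 : ¬ G.Adj a0 a4) (n3 : ¬ G.Adj a0 a5) (n4 : ¬ G.Adj a0 a6) (n5 : ¬ G.Adj a1 a3) (n6 : ¬ G.Adj a1 a4) (n7 : ¬ G.Adj a1 a5) (n8 : ¬ G.Adj a1 a6) (n9 : ¬ G.Adj a2 a4) (n10 : ¬ G.Adj a2 a5) (n11 : ¬ G.Adj a2 a6) (n12 : ¬ G.Adj a3 a5) (n13 : ¬ G.Adj a3 a6) (n14 : ¬ G.Adj a4 a6) (d0 : a0 ≠ a2) (d1 : a0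 ≠ a3) (d2 : a0 ≠ a4) (d3 : a0 ≠ a5) (d4 : a0 ≠ a6) (d5 : a1 ≠ a3) (d6 : a1 ≠ a4) (d7 : a1 ≠ a5) (d8 : a1 ≠ a6) (d9 : a2 ≠ a4) (d10 : a2 ≠ a5) (d11 : a2 ≠ a6) (d12 : a3 ≠ a5) (d13 : a3 ≠ a6) (d14 : a4 ≠ a6) : False := by
  apply hP7.false
  refine ⟨⟨![a0,a1,a2,a3,a4,a5,a6], ?_⟩, ?_⟩
  · intro i j
    fin_cases i <;> fin_cases j
    exacts [fun _ => rfl, fun h => absurd h (e0).ne, fun h => absurd h (d0), fun h => absurd h (d1), fun h => absurd h (d2), fun h => absurd h (d3), fun h => absurd h (d4), fun h => absurd h (e0.symm).ne, fun _ => rfl, fun h => absurd h (e1).ne, fun h => absurd h (d5), fun h => absurd h (d6), fun h => absurd h (d7), fun h => absurd h (d8), fun h => absurd h (d0.symm), fun h => absurd h (e1.symm).ne, fun _ => rfl, fun h => absurd h (e2).ne, fun h => absurd h (d9), fun h => absurd h (d10), fun h => absurd h (d11), fun h => absurd h (d1.symm), fun h => absurd h (d5.symm), fun h => absurd h (e2.symm).ne,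 fun _ => rfl, fun h => absurd h (e3).ne, fun h => absurd h (d12), fun h => absurd h (d13), fun h => absurd h (d2.symm), fun h => absurd h (d6.symm), fun h => absurd h (d9.symm), fun h => absurd h (e3.symm).ne, fun _ => rfl, fun h => absurd h (e4).ne, fun h => absurd h (d14), fun h => absurd h (d3.symm), fun h => absurd h (d7.symm), fun h => absurd h (d10.symm), fun h => absurd h (d12.symm), fun h => absurd h (e4.symm).ne, fun _ => rfl, fun h => absurd h (e5).ne, fun h => absurd h (d4.symm), fun h => absurd h (d8.symm), fun h => absurd h (d11.symm), fun h => absurd h (d13.symm), fun h => absurd h (d14.symm), fun h => absurd h (e5.symm).ne, fun _ => rfl]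
  · intro i j
    fin_cases i <;> fin_cases j
    exacts [iff_of_false (G.loopless.irrefl a0) (by decide), iff_of_true (e0) (by decide), iff_of_false (n0) (by decide), iff_of_false (n1) (by decide), iff_of_false (n2) (by decide), iff_of_false (n3) (by decide), iff_of_false (n4) (by decide), iff_of_true (e0.symm) (by decide), iff_of_false (G.loopless.irrefl a1) (by decide), iff_of_true (e1) (by decide), iff_of_false (n5) (by decide), iff_of_false (n6) (by decide), iff_of_false (n7) (by decide), iff_of_false (n8) (by decide), iff_of_false ((fun hh => n0 hh.symm)) (by decide), iff_of_true (e1.symm) (by decide), iff_of_false (G.loopless.irrefl a2) (by decide), iff_of_true (e2) (by decide), iff_of_false (n9) (by decide), iff_of_false (n10) (by decide), iff_of_false (n11) (by decide), iff_of_false ((fun hh => n1 hh.symm)) (by decide), iff_of_false ((fun hh => n5 hh.symm)) (by decide), iff_of_true (e2.symm) (by decide), iff_of_false (G.loopless.irrefl a3) (by decide), iff_of_true (e3) (by decide), iff_of_false (n12) (by decide), iff_of_false (n13) (by decide), iff_of_false ((fun hh => n2 hh.symm)) (by decide), iff_of_false ((fun hh => n6 hh.symm)) (by decide), iff_of_false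 ((fun hh => n9 hh.symm)) (by decide), iff_of_true (e3.symm) (by decide), iff_of_false (G.loopless.irrefl a4) (by decide), iff_of_true (e4) (by decide), iff_of_false (n14) (by decide), iff_of_false ((fun hh => n3 hh.symm)) (by decide), iff_of_false ((fun hh => n7 hh.symm)) (by decide), iff_of_false ((fun hh => n10 hh.symm)) (by decide), iff_of_false ((fun hh => n12 hh.symm)) (by decide), iff_of_true (e4.symm) (by decide), iff_of_false (G.loopless.irrefl a5) (by decide), iff_of_true (e5) (by decide), iff_of_false ((fun hh => n4 hh.symm)) (by decide), iff_of_false ((fun hh => n8 hh.symm)) (by decide), iff_of_false ((fun hh => n11 hh.symm)) (by decide), iff_of_false ((fun hh => n13 hh.symm)) (by decide), iff_of_false ((fun hh => n14 hh.symm)) (by decide), iff_of_true (e5.symm) (by decide), iff_of_false (G.loopless.irrefl a6) (by decide)]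

lemma lem_L1 {V : Type*} {G : SimpleGraph V} (hP7 : IndFree G (pathGraph 7)) (hC7 : IndFree G (cycleGraph 7)) (hC4 : IndFree G (cycleGraph 4)) (hgem : IndFree G gemGraph) (f : graphF2 ↪g G)
    (s : V) (hs1 : ¬ G.Adj s (f 1)) (hs2 : G.Adj s (f 2)) (hs3 : ¬ G.Adj s (f 3)) (nqs3 : s ≠ (f 3)) (nqs1 : s ≠ (f 1)) : False := by
  have hfA : ∀ i j : Fin 8, graphF2.Adj i j → G.Adj (f i) (f j) := fun i j h => f.map_rel_iff.mpr h
  have hfN : ∀ i j : Fin 8, ¬ graphF2.Adj i j → ¬ G.Adj (f i) (f j) := fun i j h hh => h (f.map_rel_iff.mp hh)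
  have hfD : ∀ i j : Fin 8, i ≠ j → f i ≠ f j := fun i j h hh => h (f.injective hh)
  by_cases hx1 : G.Adj s (f 0)
  · exact noC4' hC4 (hfA 0 1 (by decide)) (hfA 1 2 (by decide)) (hs2.symm) hx1 (hfN 0 2 (by decide)) (fun hh => hs1 hh.symm) (hfD 0 2 (by decide)) (nqs1.symm)
  · by_cases hx2 : G.Adj s (f 6)
    · exact noC4' hC4 (hfA 1 2 (by decide)) (hs2.symm) hx2 (hfA 6 1 (by decide)) (fun hh => hs1 hh.symm) (hfN 2 6 (by decide)) (nqs1.symm) (hfD 2 6 (by decide))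
    · by_cases hx3 : G.Adj s (f 4)
      · exact noC4' hC4 (hfA 2 3 (by decide)) (hfA 3 4 (by decide)) (hx3.symm) hs2 (hfN 2 4 (by decide)) (fun hh => hs3 hh.symm) (hfD 2 4 (by decide)) (nqs3.symm)
      · by_cases hx4 : G.Adj s (f 7)
        · exact noC4' hC4 (hfA 2 3 (by decide)) (hfA 3 7 (by decide)) (hx4.symm) hs2 (hfN 2 7 (by decide)) (fun hh => hs3 hh.symm) (hfD 2 7 (by decide)) (nqs3.symm)
        · by_cases hx5 : G.Adj s (f 5)
          · exact noP7' hP7 (hfA 1 6 (by decide)) (hfA 6 7 (by decide)) (hfA 7 3 (by decide)) (hfA 3 4 (by decide)) (hfA 4 5 (by decide)) (hx5.symm) (hfN 1 7 (by decide)) (hfN 1 3 (by decide)) (hfN 1 4 (by decide)) (hfN 1 5 (by decide)) (fun hh => hs1 hh.symm) (hfN 6 3 (by decide)) (hfN 6 4 (by decide)) (hfN 6 5 (by decide)) (fun hh => hx2 hh.symm) (hfN 7 4 (by decide)) (hfN 7 5 (by decide)) (fun hh => hx4 hh.symm) (hfN 3 5 (by decide)) (fun hh => hs3 hh.symm) (fun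 hh => hx3 hh.symm) (hfD 1 7 (by decide)) (hfD 1 3 (by decide)) (hfD 1 4 (by decide)) (hfD 1 5 (by decide)) (nqs1.symm) (hfD 6 3 (by decide)) (hfD 6 4 (by decide)) (hfD 6 5 (by decide)) (fun hh => hx1 (hh ▸ (hfA 6 0 (by decide)))) (hfD 7 4 (by decide)) (hfD 7 5 (by decide)) (fun hh => hx1 (hh ▸ (hfA 7 0 (by decide)))) (hfD 3 5 (by decide)) (nqs3.symm) (Ne.symm (fun hh => (hfN 4 2 (by decide)) (hh ▸ hs2)))
          · exact noP7' hP7 (hfA 6 0 (by decide)) (hfA 0 5 (by decide)) (hfA 5 4 (by decide)) (hfA 4 3 (by decide)) (hfA 3 2 (by decide)) (hs2.symm) (hfN 6 5 (by decide)) (hfN 6 4 (by decide)) (hfN 6 3 (by decide)) (hfN 6 2 (by decide)) (fun hh => hx2 hh.symm) (hfN 0 4 (by decide)) (hfN 0 3 (by decide)) (hfN 0 2 (by decide)) (fun hh => hx1 hh.symm) (hfN 5 3 (by decide)) (hfN 5 2 (by decide)) (fun hh => hx5 hh.symm) (hfN 4 2 (by decide)) (fun hh => hx3 hh.symm) (fun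 hh => hs3 hh.symm) (hfD 6 5 (by decide)) (hfD 6 4 (by decide)) (hfD 6 3 (by decide)) (hfD 6 2 (by decide)) (fun hh => hx1 (hh ▸ (hfA 6 0 (by decide)))) (hfD 0 4 (by decide)) (hfD 0 3 (by decide)) (hfD 0 2 (by decide)) (fun hh => hs1 (hh ▸ (hfA 0 1 (by decide)))) (hfD 5 3 (by decide)) (hfD 5 2 (by decide)) (fun hh => hx1 (hh ▸ (hfA 5 0 (by decide)))) (hfD 4 2 (by decide)) (Ne.symm (fun hh => (hfN 4 2 (by decide)) (hh ▸ hs2))) (nqs3.symm)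

lemma lem_L2 {V : Type*} {G : SimpleGraph V} (hP7 : IndFree G (pathGraph 7)) (hC7 : IndFree G (cycleGraph 7)) (hC4 : IndFree G (cycleGraph 4)) (hgem : IndFree G gemGraph) (f : graphF2 ↪g G)
    (s : V) (hs0 : ¬ G.Adj s (f 0)) (hs1 : G.Adj s (f 1)) (hs2 : G.Adj s (f 2)) (hs3 : ¬ G.Adj s (f 3)) : False := by
  have hfA : ∀ i j : Fin 8, graphF2.Adj i j → G.Adj (f i) (f j) := fun i j h => f.map_rel_iff.mpr h
  have hfN : ∀ i j : Fin 8, ¬ graphF2.Adj i j → ¬ G.Adj (f i) (f j) := fun i j h hh => h (f.map_rel_iff.mp hh)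
  have hfD : ∀ i j : Fin 8, i ≠ j → f i ≠ f j := fun i j h hh => h (f.injective hh)
  by_cases hx1 : G.Adj s (f 5)
  · exact noC4' hC4 (hfA 0 1 (by decide)) (hs1.symm) hx1 (hfA 5 0 (by decide)) (fun hh => hs0 hh.symm) (hfN 1 5 (by decide)) (Ne.symm (fun hh => (hfN 0 2 (by decide)) (hh ▸ hs2))) (hfD 1 5 (by decide))
  · by_cases hx2 : G.Adj s (f 7)
    · exact noC4' hC4 (hfA 0 1 (by decide)) (hs1.symm) hx2 (hfA 7 0 (by decide)) (fun hh => hs0 hh.symm) (hfN 1 7 (by decide)) (Ne.symm (fun hh => (hfN 0 2 (by decide)) (hh ▸ hs2))) (hfD 1 7 (by decide))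
    · by_cases hx3 : G.Adj s (f 4)
      · exact noC4' hC4 (hfA 2 3 (by decide)) (hfA 3 4 (by decide)) (hx3.symm) hs2 (hfN 2 4 (by decide)) (fun hh => hs3 hh.symm) (hfD 2 4 (by decide)) (Ne.symm (fun hh => (hfN 3 1 (by decide)) (hh ▸ hs1)))
      · by_cases hx4 : G.Adj s (f 6)
        · exact noGem' hgem (hfA 0 6 (by decide)) (hx4.symm) hs2 (hfA 1 0 (by decide)) (hfA 1 6 (by decide)) (hs1.symm) (hfA 1 2 (by decide)) (fun hh => hs0 hh.symm) (hfN 0 2 (by decide)) (hfN 6 2 (by decide)) (Ne.symm (fun hh => (hfN 0 2 (by decide)) (hh ▸ hs2))) (hfD 0 2 (by decide)) (hfD 6 2 (by decide))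
        · exact noP7' hP7 (hfA 5 4 (by decide)) (hfA 4 3 (by decide)) (hfA 3 7 (by decide)) (hfA 7 6 (by decide)) (hfA 6 1 (by decide)) (hs1.symm) (hfN 5 3 (by decide)) (hfN 5 7 (by decide)) (hfN 5 6 (by decide)) (hfN 5 1 (by decide)) (fun hh => hx1 hh.symm) (hfN 4 7 (by decide)) (hfN 4 6 (by decide)) (hfN 4 1 (by decide)) (fun hh => hx3 hh.symm) (hfN 3 6 (by decide)) (hfN 3 1 (by decide)) (fun hh => hs3 hh.symm) (hfN 7 1 (by decide)) (fun hh => hx2 hh.symm) (fun hh => hx4 hh.symm) (hfD 5 3 (by decide)) (hfD 5 7 (by decide)) (hfD 5 6 (by decide)) (hfD 5 1 (by decide)) (fun hh => hs0 (hh ▸ (hfA 5 0 (by decide)))) (hfD 4 7 (by decide)) (hfD 4 6 (by decide)) (hfD 4 1 (by decide)) (Ne.symm (fun hh => (hfN 4 1 (by decide)) (hh ▸ hs1))) (hfD 3 6 (by decide)) (hfD 3 1 (by decide)) (Ne.symm (fun hh => (hfN 3 1 (by decide)) (hh ▸ hs1))) (hfD 7 1 (by decide)) (fun hh => hs0 (hh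 ▸ (hfA 7 0 (by decide)))) (fun hh => hs0 (hh ▸ (hfA 6 0 (by decide))))

lemma lem_d1 {V : Type*} {G : SimpleGraph V} (hP7 : IndFree G (pathGraph 7)) (hC7 : IndFree G (cycleGraph 7)) (hC4 : IndFree G (cycleGraph 4)) (hgem : IndFree G gemGraph) (f : graphF2 ↪g G)
    (s : V) (hs0 : G.Adj s (f 0)) (hs2 : G.Adj s (f 2)) (hs3 : G.Adj s (f 3)) : False := by
  have hfA : ∀ i j : Fin 8, graphF2.Adj i j → G.Adj (f i) (f j) := fun i j h => f.map_rel_iff.mpr h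
  have hfN : ∀ i j : Fin 8, ¬ graphF2.Adj i j → ¬ G.Adj (f i) (f j) := fun i j h hh => h (f.map_rel_iff.mp hh)
  have hfD : ∀ i j : Fin 8, i ≠ j → f i ≠ f j := fun i j h hh => h (f.injective hh)
  by_cases hx1 : G.Adj s (f 1)
  · exact noGem' hgem (hfA 0 1 (by decide)) (hfA 1 2 (by decide)) (hfA 2 3 (by decide)) hs0 hx1 hs2 hs3 (hfN 0 2 (by decide)) (hfN 0 3 (by decide)) (hfN 1 3 (by decide)) (hfD 0 2 (by decide)) (hfD 0 3 (by decide)) (hfD 1 3 (by decide))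
  · exact noC4' hC4 (hfA 0 1 (by decide)) (hfA 1 2 (by decide)) (hs2.symm) hs0 (hfN 0 2 (by decide)) (fun hh => hx1 hh.symm) (hfD 0 2 (by decide)) (Ne.symm (fun hh => (hfN 1 3 (by decide)) (hh ▸ hs3)))

lemma lem_d6 {V : Type*} {G : SimpleGraph V} (hP7 : IndFree G (pathGraph 7)) (hC7 : IndFree G (cycleGraph 7)) (hC4 : IndFree G (cycleGraph 4)) (hgem : IndFree G gemGraph) (f : graphF2 ↪g G)
    (s : V) (hs2 : G.Adj s (f 2)) (hs3 : G.Adj s (f 3)) (hs5 : G.Adj s (f 5)) : False := by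
  have hfA : ∀ i j : Fin 8, graphF2.Adj i j → G.Adj (f i) (f j) := fun i j h => f.map_rel_iff.mpr h
  have hfN : ∀ i j : Fin 8, ¬ graphF2.Adj i j → ¬ G.Adj (f i) (f j) := fun i j h hh => h (f.map_rel_iff.mp hh)
  have hfD : ∀ i j : Fin 8, i ≠ j → f i ≠ f j := fun i j h hh => h (f.injective hh)
  by_cases hx1 : G.Adj s (f 4)
  · exact noGem' hgem (hfA 2 3 (by decide)) (hfA 3 4 (by decide)) (hfA 4 5 (by decide)) hs2 hs3 hx1 hs5 (hfN 2 4 (by decide)) (hfN 2 5 (by decide)) (hfN 3 5 (by decide)) (hfD 2 4 (by decide)) (hfD 2 5 (by decide)) (hfD 3 5 (by decide))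
  · exact noC4' hC4 (hfA 3 4 (by decide)) (hfA 4 5 (by decide)) (hs5.symm) hs3 (hfN 3 5 (by decide)) (fun hh => hx1 hh.symm) (hfD 3 5 (by decide)) (Ne.symm (fun hh => (hfN 4 2 (by decide)) (hh ▸ hs2)))

lemma lem_dx {V : Type*} {G : SimpleGraph V} (hP7 : IndFree G (pathGraph 7)) (hC7 : IndFree G (cycleGraph 7)) (hC4 : IndFree G (cycleGraph 4)) (hgem : IndFree G gemGraph) (f : graphF2 ↪g G)
    (s : V) (hs2 : G.Adj s (f 2)) (hs3 : G.Adj s (f 3)) (hs6 : G.Adj s (f 6)) : False := by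
  have hfA : ∀ i j : Fin 8, graphF2.Adj i j → G.Adj (f i) (f j) := fun i j h => f.map_rel_iff.mpr h
  have hfN : ∀ i j : Fin 8, ¬ graphF2.Adj i j → ¬ G.Adj (f i) (f j) := fun i j h hh => h (f.map_rel_iff.mp hh)
  have hfD : ∀ i j : Fin 8, i ≠ j → f i ≠ f j := fun i j h hh => h (f.injective hh)
  by_cases hx1 : G.Adj s (f 1)
  · exact noGem' hgem (hfA 3 2 (by decide)) (hfA 2 1 (by decide)) (hfA 1 6 (by decide)) hs3 hs2 hx1 hs6 (hfN 3 1 (by decide)) (hfN 3 6 (by decide)) (hfN 2 6 (by decide)) (hfD 3 1 (by decide)) (hfD 3 6 (by decide)) (hfD 2 6 (by decide))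
  · exact noC4' hC4 (hfA 1 2 (by decide)) (hs2.symm) hs6 (hfA 6 1 (by decide)) (fun hh => hx1 hh.symm) (hfN 2 6 (by decide)) (Ne.symm (fun hh => (hfN 1 3 (by decide)) (hh ▸ hs3))) (hfD 2 6 (by decide))

lemma lem_d2 {V : Type*} {G : SimpleGraph V} (hP7 : IndFree G (pathGraph 7)) (hC7 : IndFree G (cycleGraph 7)) (hC4 : IndFree G (cycleGraph 4)) (hgem : IndFree G gemGraph) (f : graphF2 ↪g G)
    (s t : V) (hs1 : G.Adj s (f 1)) (hs2 : G.Adj s (f 2)) (hs3 : G.Adj s (f 3)) (ht2 : G.Adj t (f 2)) (ht3 : G.Adj t (f 3)) (hst : ¬ G.Adj s t) (nqst : s ≠ t) : False := by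
  have hfA : ∀ i j : Fin 8, graphF2.Adj i j → G.Adj (f i) (f j) := fun i j h => f.map_rel_iff.mpr h
  have hfN : ∀ i j : Fin 8, ¬ graphF2.Adj i j → ¬ G.Adj (f i) (f j) := fun i j h hh => h (f.map_rel_iff.mp hh)
  have hfD : ∀ i j : Fin 8, i ≠ j → f i ≠ f j := fun i j h hh => h (f.injective hh)
  by_cases hx1 : G.Adj t (f 1)
  · exact noC4' hC4 (hs1.symm) hs3 (ht3.symm) hx1 (hfN 1 3 (by decide)) hst (hfD 1 3 (by decide)) nqst
  · exact noGem' hgem (hs1.symm) hs3 (ht3.symm) (hfA 2 1 (by decide)) (hs2.symm) (hfA 2 3 (by decide)) (ht2.symm) (hfN 1 3 (by decide)) (fun hh => hx1 hh.symm) hst (hfD 1 3 (by decide)) (Ne.symm (fun hh => (hfN 1 3 (by decide)) (hh ▸ ht3))) nqst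

lemma lem_dz {V : Type*} {G : SimpleGraph V} (hP7 : IndFree G (pathGraph 7)) (hC7 : IndFree G (cycleGraph 7)) (hC4 : IndFree G (cycleGraph 4)) (hgem : IndFree G gemGraph) (f : graphF2 ↪g G)
    (s t : V) (hs2 : G.Adj s (f 2)) (hs3 : G.Adj s (f 3)) (hs7 : G.Adj s (f 7)) (ht2 : G.Adj t (f 2)) (ht3 : G.Adj t (f 3)) (hst : ¬ G.Adj s t) (nqst : s ≠ t) : False := by
  have hfA : ∀ i j : Fin 8, graphF2.Adj i j → G.Adj (f i) (f j) := fun i j h => f.map_rel_iff.mpr h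
  have hfN : ∀ i j : Fin 8, ¬ graphF2.Adj i j → ¬ G.Adj (f i) (f j) := fun i j h hh => h (f.map_rel_iff.mp hh)
  have hfD : ∀ i j : Fin 8, i ≠ j → f i ≠ f j := fun i j h hh => h (f.injective hh)
  by_cases hx1 : G.Adj t (f 7)
  · exact noC4' hC4 (hs2.symm) hs7 (hx1.symm) ht2 (hfN 2 7 (by decide)) hst (hfD 2 7 (by decide)) nqst
  · exact noGem' hgem (hs7.symm) hs2 (ht2.symm) (hfA 3 7 (by decide)) (hs3.symm) (hfA 3 2 (by decide)) (ht3.symm) (hfN 7 2 (by decide)) (fun hh => hx1 hh.symm) hst (hfD 7 2 (by decide)) (Ne.symm (fun hh => (hfN 7 2 (by decide)) (hh ▸ ht2))) nqst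

lemma lem_d5 {V : Type*} {G : SimpleGraph V} (hP7 : IndFree G (pathGraph 7)) (hC7 : IndFree G (cycleGraph 7)) (hC4 : IndFree G (cycleGraph 4)) (hgem : IndFree G gemGraph) (f : graphF2 ↪g G)
    (s t : V) (hs2 : G.Adj s (f 2)) (hs3 : G.Adj s (f 3)) (hs4 : G.Adj s (f 4)) (ht2 : G.Adj t (f 2)) (ht3 : G.Adj t (f 3)) (hst : ¬ G.Adj s t) (nqst : s ≠ t) : False := by
  have hfA : ∀ i j : Fin 8, graphF2.Adj i j → G.Adj (f i) (f j) := fun i j h => f.map_rel_iff.mpr h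
  have hfN : ∀ i j : Fin 8, ¬ graphF2.Adj i j → ¬ G.Adj (f i) (f j) := fun i j h hh => h (f.map_rel_iff.mp hh)
  have hfD : ∀ i j : Fin 8, i ≠ j → f i ≠ f j := fun i j h hh => h (f.injective hh)
  by_cases hx1 : G.Adj t (f 4)
  · exact noC4' hC4 (hs2.symm) hs4 (hx1.symm) ht2 (hfN 2 4 (by decide)) hst (hfD 2 4 (by decide)) nqst
  · exact noGem' hgem (hs4.symm) hs2 (ht2.symm) (hfA 3 4 (by decide)) (hs3.symm) (hfA 3 2 (by decide)) (ht3.symm) (hfN 4 2 (by decide)) (fun hh => hx1 hh.symm) hst (hfD 4 2 (by decide)) (Ne.symm (fun hh => (hfN 4 2 (by decide)) (hh ▸ ht2))) nqst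

lemma lem_za {V : Type*} {G : SimpleGraph V} (hP7 : IndFree G (pathGraph 7)) (hC7 : IndFree G (cycleGraph 7)) (hC4 : IndFree G (cycleGraph 4)) (hgem : IndFree G gemGraph) (f : graphF2 ↪g G)
    (s t c : V) (hs0 : ¬ G.Adj s (f 0)) (hs1 : ¬ G.Adj s (f 1)) (hs2 : G.Adj s (f 2)) (hs3 : G.Adj s (f 3)) (hs4 : ¬ G.Adj s (f 4)) (hs5 : ¬ G.Adj s (f 5)) (hs6 : ¬ G.Adj s (f 6)) (hs7 : ¬ G.Adj s (f 7)) (ht0 : ¬ G.Adj t (f 0)) (ht1 : ¬ G.Adj t (f 1)) (ht2 : G.Adj t (f 2)) (ht3 : G.Adj t (f 3)) (ht4 : ¬ G.Adj t (f 4)) (ht5 : ¬ G.Adj t (f 5)) (ht6 : ¬ G.Adj t (f 6)) (ht7 : ¬ G.Adj t (f 7)) (hst : ¬ G.Adj s t) (hc2 : ¬ G.Adj c (f 2)) (hsc : G.Adj s c) (nqc2 : c ≠ (f 2)) (nqst : s ≠ t) : False := by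
  have hfA : ∀ i j : Fin 8, graphF2.Adj i j → G.Adj (f i) (f j) := fun i j h => f.map_rel_iff.mpr h
  have hfN : ∀ i j : Fin 8, ¬ graphF2.Adj i j → ¬ G.Adj (f i) (f j) := fun i j h hh => h (f.map_rel_iff.mp hh)
  have hfD : ∀ i j : Fin 8, i ≠ j → f i ≠ f j := fun i j h hh => h (f.injective hh)
  by_cases hx1 : G.Adj c (f 1)
  · exact noC4' hC4 (hfA 1 2 (by decide)) (hs2.symm) hsc hx1 (fun hh => hs1 hh.symm) (fun hh => hc2 hh.symm) (fun hh => hs0 (hh ▸ (hfA 1 0 (by decide)))) (nqc2.symm)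
  · by_cases hx2 : G.Adj c t
    · exact noC4' hC4 (hs2.symm) hsc hx2 ht2 (fun hh => hc2 hh.symm) hst (nqc2.symm) nqst
    · by_cases hx3 : G.Adj c (f 3)
      · exact noGem' hgem ht2 (hs2.symm) hsc (ht3.symm) (hfA 3 2 (by decide)) (hs3.symm) (hx3.symm) (fun hh => hst hh.symm) (fun hh => hx2 hh.symm) (fun hh => hc2 hh.symm) (nqst.symm) (fun hh => hc2 (hh ▸ ht2)) (nqc2.symm)
      · by_cases hx4 : G.Adj c (f 4)
        · exact noC4' hC4 (hfA 3 4 (by decide)) (hx4.symm) (hsc.symm) hs3 (fun hh => hx3 hh.symm) (fun hh => hs4 hh.symm) (fun hh => hc2 (hh ▸ (hfA 3 2 (by decide)))) (Ne.symm (fun hh => (hfN 4 2 (by decide)) (hh ▸ hs2)))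
        · by_cases hx5 : G.Adj c (f 7)
          · exact noC4' hC4 (hfA 3 7 (by decide)) (hx5.symm) (hsc.symm) hs3 (fun hh => hx3 hh.symm) (fun hh => hs7 hh.symm) (fun hh => hc2 (hh ▸ (hfA 3 2 (by decide)))) (fun hh => hs0 (hh ▸ (hfA 7 0 (by decide))))
          · by_cases hx6 : G.Adj c (f 0)
            · by_cases hx7 : G.Adj c (f 5)
              · by_cases hx8 : G.Adj c (f 6)
                · exact noGem' hgem (hfA 1 6 (by decide)) (hx8.symm) hx7 (hfA 0 1 (by decide)) (hfA 0 6 (by decide)) (hx6.symm) (hfA 0 5 (by decide)) (fun hh => hx1 hh.symm) (hfN 1 5 (by decide)) (hfN 6 5 (by decide)) (fun hh => hc2 (hh ▸ (hfA 1 2 (by decide)))) (hfD 1 5 (by decide)) (hfD 6 5 (by decide))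
                · exact noP7' hP7 (hfA 1 6 (by decide)) (hfA 6 7 (by decide)) (hfA 7 3 (by decide)) (hfA 3 4 (by decide)) (hfA 4 5 (by decide)) (hx7.symm) (hfN 1 7 (by decide)) (hfN 1 3 (by decide)) (hfN 1 4 (by decide)) (hfN 1 5 (by decide)) (fun hh => hx1 hh.symm) (hfN 6 3 (by decide)) (hfN 6 4 (by decide)) (hfN 6 5 (by decide)) (fun hh => hx8 hh.symm) (hfN 7 4 (by decide)) (hfN 7 5 (by decide)) (fun hh => hx5 hh.symm) (hfN 3 5 (by decide)) (fun hh => hx3 hh.symm) (fun hh => hx4 hh.symm) (hfD 1 7 (by decide)) (hfD 1 3 (by decide)) (hfD 1 4 (by decide)) (hfD 1 5 (by decide)) (fun hh => hc2 (hh ▸ (hfA 1 2 (by decide)))) (hfD 6 3 (by decide)) (hfD 6 4 (by decide)) (hfD 6 5 (by decide)) (fun hh => hx1 (hh ▸ (hfA 6 1 (by decide)))) (hfD 7 4 (by decide)) (hfD 7 5 (by decide)) (fun hh => hx3 (hh ▸ (hfA 7 3 (by decide)))) (hfD 3 5 (by decide)) (Ne.symm (fun hh => (hfN 3 0 (by decide))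 (hh ▸ hx6))) (Ne.symm (fun hh => (hfN 4 0 (by decide)) (hh ▸ hx6)))
              · exact noP7' hP7 (hfA 4 5 (by decide)) (hfA 5 0 (by decide)) (hx6.symm) (hsc.symm) hs2 (ht2.symm) (hfN 4 0 (by decide)) (fun hh => hx4 hh.symm) (fun hh => hs4 hh.symm) (hfN 4 2 (by decide)) (fun hh => ht4 hh.symm) (fun hh => hx7 hh.symm) (fun hh => hs5 hh.symm) (hfN 5 2 (by decide)) (fun hh => ht5 hh.symm) (fun hh => hs0 hh.symm) (hfN 0 2 (by decide)) (fun hh => ht0 hh.symm) hc2 hx2 hst (hfD 4 0 (by decide)) (Ne.symm (fun hh => (hfN 4 0 (by decide)) (hh ▸ hx6))) (Ne.symm (fun hh => (hfN 4 2 (by decide)) (hh ▸ hs2))) (hfD 4 2 (by decide)) (Ne.symm (fun hh => (hfN 4 2 (by decide)) (hh ▸ ht2))) (fun hh => hx4 (hh ▸ (hfA 5 4 (by decide)))) (fun hh => hs0 (hh ▸ (hfA 5 0 (by decide)))) (hfD 5 2 (by decide)) (fun hh => ht0 (hh ▸ (hfA 5 0 (by decide)))) (fun hh => hs1 (hh ▸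 (hfA 0 1 (by decide)))) (hfD 0 2 (by decide)) (fun hh => ht1 (hh ▸ (hfA 0 1 (by decide)))) nqc2 (fun hh => ht0 (hh ▸ hx6)) nqst
            · by_cases hx9 : G.Adj c (f 5)
              · exact noP7' hP7 (hfA 1 0 (by decide)) (hfA 0 5 (by decide)) (hx9.symm) (hsc.symm) hs3 (ht3.symm) (hfN 1 5 (by decide)) (fun hh => hx1 hh.symm) (fun hh => hs1 hh.symm) (hfN 1 3 (by decide)) (fun hh => ht1 hh.symm) (fun hh => hx6 hh.symm) (fun hh => hs0 hh.symm) (hfN 0 3 (by decide)) (fun hh => ht0 hh.symm) (fun hh => hs5 hh.symm) (hfN 5 3 (by decide)) (fun hh => ht5 hh.symm) hx3 hx2 hst (hfD 1 5 (by decide)) (fun hh => hx6 (hh ▸ (hfA 1 0 (by decide)))) (fun hh => hs0 (hh ▸ (hfA 1 0 (by decide)))) (hfD 1 3 (by decide)) (fun hh => ht0 (hh ▸ (hfA 1 0 (by decide)))) (fun hh => hx1 (hh ▸ (hfA 0 1 (by decide)))) (fun hh => hs1 (hh ▸ (hfA 0 1 (by decide)))) (hfD 0 3 (by decide)) (fun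 hh => ht1 (hh ▸ (hfA 0 1 (by decide)))) (fun hh => hs0 (hh ▸ (hfA 5 0 (by decide)))) (hfD 5 3 (by decide)) (fun hh => ht0 (hh ▸ (hfA 5 0 (by decide)))) (Ne.symm (fun hh => hc2 (hh ▸ (hfA 3 2 (by decide))))) (Ne.symm (fun hh => hc2 (hh ▸ ht2))) nqst
              · exact noP7' hP7 (hfA 1 0 (by decide)) (hfA 0 5 (by decide)) (hfA 5 4 (by decide)) (hfA 4 3 (by decide)) (hs3.symm) hsc (hfN 1 5 (by decide)) (hfN 1 4 (by decide)) (hfN 1 3 (by decide)) (fun hh => hs1 hh.symm) (fun hh => hx1 hh.symm) (hfN 0 4 (by decide)) (hfN 0 3 (by decide)) (fun hh => hs0 hh.symm) (fun hh => hx6 hh.symm) (hfN 5 3 (by decide)) (fun hh => hs5 hh.symm) (fun hh => hx9 hh.symm) (fun hh => hs4 hh.symm) (fun hh => hx4 hh.symm) (fun hh => hx3 hh.symm) (hfD 1 5 (by decide)) (hfD 1 4 (by decide)) (hfD 1 3 (by decide)) (fun hh => hs0 (hh ▸ (hfA 1 0 (by decide)))) (fun hh => hx6 (hh ▸ (hfA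 1 0 (by decide)))) (hfD 0 4 (by decide)) (hfD 0 3 (by decide)) (fun hh => hs1 (hh ▸ (hfA 0 1 (by decide)))) (fun hh => hx1 (hh ▸ (hfA 0 1 (by decide)))) (hfD 5 3 (by decide)) (fun hh => hs0 (hh ▸ (hfA 5 0 (by decide)))) (fun hh => hx6 (hh ▸ (hfA 5 0 (by decide)))) (Ne.symm (fun hh => (hfN 4 2 (by decide)) (hh ▸ hs2))) (fun hh => hx3 (hh ▸ (hfA 4 3 (by decide)))) (fun hh => hc2 (hh ▸ (hfA 3 2 (by decide))))

lemma lem_zb {V : Type*} {G : SimpleGraph V} (hP7 : IndFree G (pathGraph 7)) (hC7 : IndFree G (cycleGraph 7)) (hC4 : IndFree G (cycleGraph 4)) (hgem : IndFree G gemGraph) (f : graphF2 ↪g G)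
    (s t c : V) (hs0 : ¬ G.Adj s (f 0)) (hs1 : ¬ G.Adj s (f 1)) (hs2 : G.Adj s (f 2)) (hs3 : G.Adj s (f 3)) (hs4 : ¬ G.Adj s (f 4)) (hs5 : ¬ G.Adj s (f 5)) (hs6 : ¬ G.Adj s (f 6)) (hs7 : ¬ G.Adj s (f 7)) (ht0 : ¬ G.Adj t (f 0)) (ht1 : ¬ G.Adj t (f 1)) (ht2 : G.Adj t (f 2)) (ht3 : G.Adj t (f 3)) (ht4 : ¬ G.Adj t (f 4)) (ht5 : ¬ G.Adj t (f 5)) (ht6 : ¬ G.Adj t (f 6)) (ht7 : ¬ G.Adj t (f 7)) (hst : ¬ G.Adj s t) (hc2 : G.Adj c (f 2)) (hc3 : ¬ G.Adj c (f 3)) (hsc : G.Adj s c) (nqst : s ≠ t) (nqc3 : c ≠ (f 3)) : False := by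
  have hfA : ∀ i j : Fin 8, graphF2.Adj i j → G.Adj (f i) (f j) := fun i j h => f.map_rel_iff.mpr h
  have hfN : ∀ i j : Fin 8, ¬ graphF2.Adj i j → ¬ G.Adj (f i) (f j) := fun i j h hh => h (f.map_rel_iff.mp hh)
  have hfD : ∀ i j : Fin 8, i ≠ j → f i ≠ f j := fun i j h hh => h (f.injective hh)
  by_cases hx1 : G.Adj c (f 4)
  · exact noC4' hC4 (hfA 2 3 (by decide)) (hfA 3 4 (by decide)) (hx1.symm) hc2 (hfN 2 4 (by decide)) (fun hh => hc3 hh.symm) (hfD 2 4 (by decide)) (nqc3.symm)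
  · by_cases hx2 : G.Adj c (f 7)
    · exact noC4' hC4 (hfA 2 3 (by decide)) (hfA 3 7 (by decide)) (hx2.symm) hc2 (hfN 2 7 (by decide)) (fun hh => hc3 hh.symm) (hfD 2 7 (by decide)) (nqc3.symm)
    · by_cases hx3 : G.Adj c t
      · exact noC4' hC4 (hs3.symm) hsc hx3 ht3 (fun hh => hc3 hh.symm) hst (nqc3.symm) nqst
      · exact noGem' hgem ht3 (hs3.symm) hsc (ht2.symm) (hfA 2 3 (by decide)) (hs2.symm) (hc2.symm) (fun hh => hst hh.symm) (fun hh => hx3 hh.symm) (fun hh => hc3 hh.symm) (nqst.symm) (fun hh => hc3 (hh ▸ ht3)) (nqc3.symm)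

lemma commonClique {V : Type*} {G : SimpleGraph V} (hC4 : IndFree G (cycleGraph 4))
    {u w a b : V} (huw : ¬ G.Adj u w) (hne : u ≠ w)
    (ha1 : G.Adj u a) (ha2 : G.Adj w a) (hb1 : G.Adj u b) (hb2 : G.Adj w b)
    (hab : a ≠ b) : G.Adj a b := by
  by_contra h
  exact noC4' hC4 ha1 ha2.symm hb2 hb1.symm huw h hne hab

theorem stmt_11 {V : Type*} [Fintype V] (G : SimpleGraph V) (hconn : G.Connected)
    (hP7 : IndFree G (pathGraph 7)) (hC7 : IndFree G (cycleGraph 7))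
    (hC4 : IndFree G (cycleGraph 4)) (hgem : IndFree G gemGraph)
    (hF2 : Nonempty (graphF2 ↪g G)) :
    HasCliqueCutset G ∨ ∃ v : V, IsBisimplicial G v := by
  classical
  obtain ⟨f⟩ := hF2
  right
  have hfA : ∀ i j : Fin 8, graphF2.Adj i j → G.Adj (f i) (f j) := fun i j h => f.map_rel_iff.mpr h
  have hfN : ∀ i j : Fin 8, ¬ graphF2.Adj i j → ¬ G.Adj (f i) (f j) := fun i j h hh => h (f.map_rel_iff.mp hh)
  have hfD : ∀ i j : Fin 8, i ≠ j → f i ≠ f j := fun i j h hh => h (f.injective hh)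
  by_cases hDcl : ∀ a b : V, G.Adj a (f 2) → G.Adj a (f 3) → G.Adj b (f 2) → G.Adj b (f 3) →
      a ≠ b → G.Adj a b
  · -- Case 1 : D is a clique, v3 = f 2 is bisimplicial
    refine ⟨f 2, insert (f 1) {w | G.Adj w (f 1) ∧ G.Adj w (f 2) ∧ ¬ G.Adj w (f 3)},
      insert (f 3) {w | G.Adj w (f 2) ∧ G.Adj w (f 3)}, ?_, ?_, ?_⟩
    · -- K₁ is a clique
      intro u hu w hw hne
      rcases Set.mem_insert_iff.mp hu with rfl | hu <;> rcases Set.mem_insert_iff.mp hw with rfl | hw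
      · exact absurd rfl hne
      · exact hw.1.symm
      · exact hu.1
      · -- both in X : both adjacent to f 0 by lem_L2, then common neighbours of f0, f2
        have hu0 : G.Adj u (f 0) := by
          by_contra h0
          exact lem_L2 hP7 hC7 hC4 hgem f u h0 hu.1 hu.2.1 hu.2.2
        have hw0 : G.Adj w (f 0) := by
          by_contra h0
          exact lem_L2 hP7 hC7 hC4 hgem f w h0 hw.1 hw.2.1 hw.2.2
        exact commonClique hC4 (hfN 0 2 (by decide)) (hfD 0 2 (by decide))
          hu0.symm hu.2.1.symm hw0.symm hw.2.1.symm hne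
    · -- K₂ is a clique
      intro u hu w hw hne
      rcases Set.mem_insert_iff.mp hu with rfl | hu <;> rcases Set.mem_insert_iff.mp hw with rfl | hw
      · exact absurd rfl hne
      · exact hw.2.symm
      · exact hu.2
      · exact hDcl u w hu.1 hu.2 hw.1 hw.2 hne
    · -- neighborhood equality
      ext w
      simp only [mem_neighborSet, Set.mem_union, Set.mem_insert_iff, Set.mem_setOf_eq]
      constructor
      · intro hw
        by_cases h1 : w = f 1
        · exact Or.inl (Or.inl h1)
        by_cases h3 : w = f 3
        · exact Or.inr (Or.inl h3)
        by_cases hw3 : G.Adj w (f 3)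
        · exact Or.inr (Or.inr ⟨hw.symm, hw3⟩)
        · have hw1 : G.Adj w (f 1) := by
            by_contra hh
            exact lem_L1 hP7 hC7 hC4 hgem f w hh hw.symm hw3 h3 h1
          exact Or.inl (Or.inr ⟨hw1, hw.symm, hw3⟩)
      · rintro ((rfl | hw) | (rfl | hw))
        · exact hfA 2 1 (by decide)
        · exact hw.2.1.symm
        · exact hfA 2 3 (by decide)
        · exact hw.1.symm
  · -- Case 2 : D is not a clique
    push_neg at hDcl
    obtain ⟨a, b, ha2, ha3, hb2, hb3, hab, hnab⟩ := hDcl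
    set D : Finset V := Finset.univ.filter (fun w => G.Adj w (f 2) ∧ G.Adj w (f 3)) with hDdef
    have hmemD : ∀ w : V, w ∈ D ↔ (G.Adj w (f 2) ∧ G.Adj w (f 3)) := by
      intro w; simp [hDdef]
    have haD : a ∈ D := (hmemD a).mpr ⟨ha2, ha3⟩
    have hbD : b ∈ D := (hmemD b).mpr ⟨hb2, hb3⟩
    set deg : V → ℕ := fun w => (D.filter (G.Adj w)).card with hdegdef
    obtain ⟨s, hsD, hsmin⟩ := D.exists_min_image deg ⟨a, haD⟩
    have hs2 : G.Adj s (f 2) := ((hmemD s).mp hsD).1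
    have hs3 : G.Adj s (f 3) := ((hmemD s).mp hsD).2
    -- find a non-neighbour t of s in D
    have hT : ∃ t ∈ D, t ≠ s ∧ ¬ G.Adj s t := by
      by_contra hall
      push_neg at hall
      have hsub1 : D.erase s ⊆ D.filter (G.Adj s) := by
        intro u hu
        rw [Finset.mem_filter]
        exact ⟨Finset.mem_of_mem_erase hu,
          hall u (Finset.mem_of_mem_erase hu) (Finset.ne_of_mem_erase hu)⟩
      have h1 : D.card - 1 ≤ deg s := by
        have := Finset.card_le_card hsub1
        rwa [Finset.card_erase_of_mem hsD] at this
      have hsub2 : D.filter (G.Adj a) ⊆ (D.erase a).erase b := by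
        intro u hu
        rw [Finset.mem_filter] at hu
        refine Finset.mem_erase.mpr ⟨?_, Finset.mem_erase.mpr ⟨?_, hu.1⟩⟩
        · rintro rfl; exact hnab hu.2
        · rintro rfl; exact G.loopless.irrefl _ hu.2
      have h2 : deg a ≤ D.card - 2 := by
        have := Finset.card_le_card hsub2
        rwa [Finset.card_erase_of_mem (Finset.mem_erase.mpr ⟨hab.symm, hbD⟩),
          Finset.card_erase_of_mem haD] at this
      have h3 : 2 ≤ D.card := Finset.one_lt_card.mpr ⟨a, haD, b, hbD, hab⟩
      have := le_trans h1 (le_trans (hsmin a haD) h2)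
      omega
    obtain ⟨t, htD, hts, hst⟩ := hT
    have ht2 : G.Adj t (f 2) := ((hmemD t).mp htD).1
    have ht3 : G.Adj t (f 3) := ((hmemD t).mp htD).2
    have nqst : s ≠ t := fun h => hts h.symm
    -- s and t have exact type {v3, v4}
    have hs0 : ¬ G.Adj s (f 0) := fun h => lem_d1 hP7 hC7 hC4 hgem f s h hs2 hs3
    have hs5 : ¬ G.Adj s (f 5) := fun h => lem_d6 hP7 hC7 hC4 hgem f s hs2 hs3 h
    have hs6 : ¬ G.Adj s (f 6) := fun h => lem_dx hP7 hC7 hC4 hgem f s hs2 hs3 h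
    have hs1 : ¬ G.Adj s (f 1) := fun h => lem_d2 hP7 hC7 hC4 hgem f s t h hs2 hs3 ht2 ht3 hst nqst
    have hs7 : ¬ G.Adj s (f 7) := fun h => lem_dz hP7 hC7 hC4 hgem f s t hs2 hs3 h ht2 ht3 hst nqst
    have hs4 : ¬ G.Adj s (f 4) := fun h => lem_d5 hP7 hC7 hC4 hgem f s t hs2 hs3 h ht2 ht3 hst nqst
    have hts' : ¬ G.Adj t s := fun h => hst h.symm
    have ht0 : ¬ G.Adj t (f 0) := fun h => lem_d1 hP7 hC7 hC4 hgem f t h ht2 ht3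
    have ht5 : ¬ G.Adj t (f 5) := fun h => lem_d6 hP7 hC7 hC4 hgem f t ht2 ht3 h
    have ht6 : ¬ G.Adj t (f 6) := fun h => lem_dx hP7 hC7 hC4 hgem f t ht2 ht3 h
    have ht1 : ¬ G.Adj t (f 1) := fun h => lem_d2 hP7 hC7 hC4 hgem f t s h ht2 ht3 hs2 hs3 hts' nqst.symm
    have ht7 : ¬ G.Adj t (f 7) := fun h => lem_dz hP7 hC7 hC4 hgem f t s ht2 ht3 h hs2 hs3 hts' nqst.symm
    have ht4 : ¬ G.Adj t (f 4) := fun h => lem_d5 hP7 hC7 hC4 hgem f t s ht2 ht3 h hs2 hs3 hts' nqst.symm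
    -- the D-neighbourhood of s is a clique
    have hNDs : ∀ c c' : V, c ∈ D → c' ∈ D → G.Adj s c → G.Adj s c' → c ≠ c' → G.Adj c c' := by
      intro c c' hcD hc'D hsc hsc' hne
      by_contra hcc
      have hy : ∃ y ∈ D, G.Adj c y ∧ (y ≠ s ∧ ¬ G.Adj s y) := by
        by_contra hall
        push_neg at hall
        have hsub : D.filter (G.Adj c) ⊆
            ((insert s (D.filter (G.Adj s))).erase c).erase c' := by
          intro u hu
          rw [Finset.mem_filter] at hu
          refine Finset.mem_erase.mpr ⟨?_, Finset.mem_erase.mpr ⟨?_, ?_⟩⟩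
          · rintro rfl; exact hcc hu.2
          · rintro rfl; exact G.loopless.irrefl _ hu.2
          · by_cases hus : u = s
            · exact Finset.mem_insert.mpr (Or.inl hus)
            · exact Finset.mem_insert.mpr (Or.inr (Finset.mem_filter.mpr
                ⟨hu.1, hall u hu.1 hu.2 hus⟩))
        have hcmem : c ∈ insert s (D.filter (G.Adj s)) :=
          Finset.mem_insert.mpr (Or.inr (Finset.mem_filter.mpr ⟨hcD, hsc⟩))
        have hc'mem : c' ∈ (insert s (D.filter (G.Adj s))).erase c :=
          Finset.mem_erase.mpr ⟨hne.symm, Finset.mem_insert.mpr (Or.inr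
            (Finset.mem_filter.mpr ⟨hc'D, hsc'⟩))⟩
        have hcard := Finset.card_le_card hsub
        rw [Finset.card_erase_of_mem hc'mem, Finset.card_erase_of_mem hcmem,
          Finset.card_insert_of_notMem (fun h => G.loopless.irrefl s (Finset.mem_filter.mp h).2)] at hcard
        have hmin := hsmin c hcD
        have hpos : 0 < (D.filter (G.Adj s)).card :=
          Finset.card_pos.mpr ⟨c, Finset.mem_filter.mpr ⟨hcD, hsc⟩⟩
        simp only [hdegdef] at hmin
        omega
      obtain ⟨y, hyD, hcy, hys, hsy⟩ := hy
      by_cases hyc' : G.Adj y c'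
      · exact noC4' hC4 hsc hcy hyc' hsc'.symm hsy hcc hys.symm hne
      · -- gem with apex f 2 on path y - c - s - c'
        have hy2 : G.Adj y (f 2) := ((hmemD y).mp hyD).1
        have hc2 : G.Adj c (f 2) := ((hmemD c).mp hcD).1
        have hc'2 : G.Adj c' (f 2) := ((hmemD c').mp hc'D).1
        exact noGem' hgem hcy.symm hsc.symm hsc' hy2.symm hc2.symm hs2.symm hc'2.symm
          (fun h => hsy h.symm) hyc' hcc hys (fun h => hsy (h ▸ hsc')) hne
    -- every neighbour of s is f 2, f 3 or in D
    have hNs : ∀ c : V, G.Adj s c → c = f 2 ∨ c = f 3 ∨ c ∈ D := by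
      intro c hsc
      by_cases hcf2 : c = f 2
      · exact Or.inl hcf2
      by_cases hcf3 : c = f 3
      · exact Or.inr (Or.inl hcf3)
      have hc2 : G.Adj c (f 2) := by
        by_contra hh
        exact lem_za hP7 hC7 hC4 hgem f s t c hs0 hs1 hs2 hs3 hs4 hs5 hs6 hs7
          ht0 ht1 ht2 ht3 ht4 ht5 ht6 ht7 hst hh hsc hcf2 nqst
      have hc3 : G.Adj c (f 3) := by
        by_contra hh
        exact lem_zb hP7 hC7 hC4 hgem f s t c hs0 hs1 hs2 hs3 hs4 hs5 hs6 hs7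
          ht0 ht1 ht2 ht3 ht4 ht5 ht6 ht7 hst hc2 hh hsc nqst hcf3
      exact Or.inr (Or.inr ((hmemD c).mpr ⟨hc2, hc3⟩))
    -- s is simplicial, hence bisimplicial
    refine ⟨s, G.neighborSet s, G.neighborSet s, ?_, ?_, (Set.union_self _).symm⟩
    all_goals {
      intro u hu w hw hne
      rw [mem_neighborSet] at hu hw
      rcases hNs u hu with rfl | rfl | huD <;> rcases hNs w hw with rfl | rfl | hwD
      · exact absurd rfl hne
      · exact hfA 2 3 (by decide)
      · exact ((hmemD w).mp hwD).1.symm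
      · exact hfA 3 2 (by decide)
      · exact absurd rfl hne
      · exact ((hmemD w).mp hwD).2.symm
      · exact ((hmemD u).mp huD).1
      · exact ((hmemD u).mp huD).2
      · exact hNDs u w huD hwD hu hw hne
    }
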